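/- For every ε ∈ (0,1) there exists a constant C = C(ε) > 0 such that the following holds. Let G be a finite abelian group, {A_g}_{g∈G} a collection of subsets of G with at least one A_g nonempty, F = Σ_{g∈G} 1_{A_g} ∘ 1_{A_g + g}, and F' = Σ_{g∈G} 1_{A_g} ∘ 1_{A_g}. If ‖μ_F − 1‖_p ≥ ε for some even integer p ≥ 2, then there exists an integer p' with 1 ≤ p' ≤ C·p such that ‖μ_{F'}‖_{p'} ≥ 1 + ε/2. -/

import Mathlib

open scoped BigOperators Classical

noncomputable section

namespace SkewPaper

variable {G : Type*}

/-- Expectation (average) of `f` over a finite type: `E[f] = (1/|G|) ∑ x, f x`. -/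
def expect [Fintype G] (f : G → ℝ) : ℝ := (∑ x, f x) / (Fintype.card G)

/-- Normalized inner product `⟨f, g⟩ = E_{x∈G} f(x) g(x)`. -/
def inprod [Fintype G] (f g : G → ℝ) : ℝ := expect (fun x => f x * g x)

/-- Convolution `(f ∗ g)(x) = E_{y∈G} f(y) g(x − y)`. -/
def conv [Fintype G] [AddCommGroup G] (f g : G → ℝ) : G → ℝ :=
  fun x => expect (fun y => f y * g (x - y))

/-- Difference convolution `(f ∘ g)(x) = E_{y∈G} f(y) g(x + y)`. -/
def dconv [Fintype G] [AddCommGroup G] (f g : G → ℝ) : G → ℝ :=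
  fun x => expect (fun y => f y * g (x + y))

/-- Indicator function `1_A` of a set `A`. -/
def ind (A : Set G) : G → ℝ := Set.indicator A (fun _ => (1 : ℝ))

/-- Normalized indicator `μ_A = (|G|/|A|) · 1_A`. -/
def muSet [Fintype G] (A : Set G) : G → ℝ :=
  fun x => ((Fintype.card G : ℝ) / (Nat.card A : ℝ)) * ind A x

/-- `μ_f = f / E[f]`, the normalization of `f` to have mean 1. -/
def muFun [Fintype G] (f : G → ℝ) : G → ℝ := fun x => f x / expect f

/-- Weighted `L^p` norm `‖f‖_{p(ν)} = (E_x ν(x) |f(x)|^p)^{1/p}`. -/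
def wnorm [Fintype G] (p : ℕ) (ν f : G → ℝ) : ℝ :=
  (expect (fun x => ν x * |f x| ^ p)) ^ ((p : ℝ)⁻¹)

/-- `L^p` norm with respect to the uniform measure. -/
def pnorm [Fintype G] (p : ℕ) (f : G → ℝ) : ℝ := wnorm p (fun _ => 1) f

/-- Sup norm `‖f‖_∞`. -/
def supNorm (f : G → ℝ) : ℝ := ⨆ x, |f x|

/-- `A` is skew-corner-free: it contains no nontrivial skew corner
`(x,y), (x,y+h), (x+h,y')` with `h ≠ 0`. -/
def IsSkewCornerFree [AddCommGroup G] (A : Set (G × G)) : Prop :=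
  ∀ x y y' h : G, (x, y) ∈ A → (x, y + h) ∈ A → (x + h, y') ∈ A → h = 0

/-- The set of quadruples `(x, y, y', h)` forming a skew corner of `A`. -/
def skewCorners [AddCommGroup G] (A : Set (G × G)) : Set (G × G × G × G) :=
  {q | (q.1, q.2.1) ∈ A ∧ (q.1, q.2.1 + q.2.2.2) ∈ A ∧ (q.1 + q.2.2.2, q.2.2.1) ∈ A}

/-- The column `A_x = {y : (x,y) ∈ A}`. -/
def col (A : Set (G × G)) (x : G) : Set G := {y | (x, y) ∈ A}

/-- A Bohr set datum: a finite frequency set of characters together with a width. -/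
structure BohrSet (G : Type*) [AddCommGroup G] where
  freq : Finset (AddChar G ℂ)
  width : ℝ

namespace BohrSet

variable [AddCommGroup G]

/-- The underlying set `Bohr(Γ, φ) = {x : |1 − γ(x)| ≤ φ for all γ ∈ Γ}`. -/
def toSet (B : BohrSet G) : Set G :=
  {x | ∀ γ ∈ B.freq, ‖(1 : ℂ) - γ x‖ ≤ B.width}

/-- The rank `|Γ|` of a Bohr set. -/
def rank (B : BohrSet G) : ℕ := B.freq.card

/-- The dilate `B_ρ = Bohr(Γ, ρφ)`. -/
def dilate (B : BohrSet G) (ρ : ℝ) : BohrSet G := ⟨B.freq, ρ * B.width⟩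

/-- `B'` is a sub-Bohr set of `B` (written `B' ≤ B`): its frequency set contains
that of `B` and its width is at most that of `B`. -/
def Sub (B' B : BohrSet G) : Prop := B.freq ⊆ B'.freq ∧ B'.width ≤ B.width

/-- A Bohr set of rank `r` is regular if for all `0 ≤ κ ≤ 1/(100r)`,
`|B_{1+κ}| ≤ (1+100κr)|B|` and `|B_{1−κ}| ≥ (1−100κr)|B|`. -/
def IsRegular (B : BohrSet G) : Prop :=
  ∀ κ : ℝ, 0 ≤ κ → κ ≤ 1 / (100 * B.rank) →
    ((Nat.card (B.dilate (1 + κ)).toSet : ℝ) ≤ (1 + 100 * κ * B.rank) * (Nat.card B.toSet : ℝ) ∧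
     (Nat.card (B.dilate (1 - κ)).toSet : ℝ) ≥ (1 - 100 * κ * B.rank) * (Nat.card B.toSet : ℝ))

/-- The density `μ(B) = |B|/|G|`. -/
def measure [Fintype G] (B : BohrSet G) : ℝ := (Nat.card B.toSet : ℝ) / (Fintype.card G : ℝ)

/-- The normalized indicator measure `μ_B`. -/
def mu [Fintype G] (B : BohrSet G) : G → ℝ := muSet B.toSet

end BohrSet


/-- (r, λ)-simultaneously spread collection of subsets of 𝔽_q^n. -/
def SimSpread {F : Type*} [Field F] [Fintype F] {n : ℕ} {ι : Type*} [Fintype ι]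
    (A : ι → Set (Fin n → F)) (r : ℕ) (lam : ℝ) : Prop :=
  ∀ V : Submodule F (Fin n → F), n ≤ Module.finrank F V + r →
    ∀ x : ι → Fin n → F,
      ∑ i, ((Nat.card ↥(((fun a => a - x i) '' A i) ∩ (V : Set (Fin n → F))) : ℝ) /
            (Nat.card (V : Set (Fin n → F)) : ℝ)) ^ 2 ≤
        lam * ∑ i, ((Nat.card (A i) : ℝ) / ((Fintype.card F : ℝ) ^ n)) ^ 2

/-- (r, λ)-simultaneously spread in an ambient subspace `W`. -/
def SimSpreadIn {F : Type*} [Field F] [Fintype F] {n : ℕ} {ι : Type*} [Fintype ι]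
    (W : Submodule F (Fin n → F)) (A : ι → Set (Fin n → F)) (r : ℕ) (lam : ℝ) : Prop :=
  ∀ V : Submodule F (Fin n → F), V ≤ W → Module.finrank F W ≤ Module.finrank F V + r →
    ∀ x : ι → Fin n → F, (∀ i, x i ∈ W) →
      ∑ i, ((Nat.card ↥(((fun a => a - x i) '' A i) ∩ (V : Set (Fin n → F))) : ℝ) /
            (Nat.card (V : Set (Fin n → F)) : ℝ)) ^ 2 ≤
        lam * ∑ i, ((Nat.card (A i) : ℝ) / (Nat.card (W : Set (Fin n → F)) : ℝ)) ^ 2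

/-- (r, δ, λ)-simultaneously spread collection of subsets of a regular Bohr set `B`. -/
def SimSpreadBohr {G : Type*} [AddCommGroup G] [Fintype G] {ι : Type*} [Fintype ι]
    (B : BohrSet G) (A : ι → Set G) (r : ℕ) (δ lam : ℝ) : Prop :=
  ∀ B' : BohrSet G, B'.Sub B → B'.IsRegular → B'.rank ≤ B.rank + r →
    δ * B.measure ≤ B'.measure →
    ∀ x : ι → G,
      ∑ i, ((Nat.card ↥(((fun a => a - x i) '' A i) ∩ B'.toSet) : ℝ) /
            (Nat.card B'.toSet : ℝ)) ^ 2 ≤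
        lam * ∑ i, ((Nat.card (A i) : ℝ) / (Nat.card B.toSet : ℝ)) ^ 2

section ExpectBasic

variable [Fintype G]

lemma expect_nonneg {f : G → ℝ} (hf : ∀ x, 0 ≤ f x) : 0 ≤ expect f := by
  unfold expect
  apply div_nonneg (Finset.sum_nonneg fun i _ => hf i) (by positivity)

lemma expect_mono {f g : G → ℝ} (h : ∀ x, f x ≤ g x) : expect f ≤ expect g := by
  unfold expect
  rcases isEmpty_or_nonempty G with hG | hG
  · simp
  · have hc : (0:ℝ) ≤ (Fintype.card G : ℝ) := by
      positivity
    exact div_le_div_of_nonneg_right (Finset.sum_le_sum fun i _ => h i) hc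

lemma expect_const [Nonempty G] (c : ℝ) : expect (fun _ : G => c) = c := by
  unfold expect
  rw [Finset.sum_const, nsmul_eq_mul]
  field_simp
  rw [Finset.card_univ, mul_comm]

lemma expect_add (f g : G → ℝ) :
    expect (fun x => f x + g x) = expect f + expect g := by
  unfold expect; rw [Finset.sum_add_distrib, add_div]

lemma expect_sub (f g : G → ℝ) :
    expect (fun x => f x - g x) = expect f - expect g := by
  unfold expect; rw [Finset.sum_sub_distrib, sub_div]

lemma const_mul_expect (c : ℝ) (f : G → ℝ) :
    expect (fun x => c * f x) = c * expect f := by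
  unfold expect; rw [← Finset.mul_sum, mul_div_assoc]

lemma expect_mul_const (c : ℝ) (f : G → ℝ) :
    expect (fun x => f x * c) = expect f * c := by
  unfold expect; rw [← Finset.sum_mul, div_mul_eq_mul_div]

lemma expect_div_const (c : ℝ) (f : G → ℝ) :
    expect (fun x => f x / c) = expect f / c := by
  simp only [div_eq_mul_inv]; exact expect_mul_const _ f

lemma expect_finsum {ι : Type*} [Fintype ι] (F : ι → G → ℝ) :
    expect (fun x => ∑ i, F i x) = ∑ i, expect (F i) := by
  unfold expect; rw [← Finset.sum_div, Finset.sum_comm]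

lemma expect_swap {H : Type*} [Fintype H] (h : G → H → ℝ) :
    expect (fun x => expect (fun y => h x y)) = expect (fun y : H => expect (fun x => h x y)) := by
  unfold expect
  simp only [← Finset.sum_div]
  rw [div_div, div_div, Finset.sum_comm, mul_comm]

lemma expect_mul_expect {H : Type*} [Fintype H] (φ : G → ℝ) (ψ : H → ℝ) :
    expect φ * expect ψ = expect (fun z : G => expect (fun w : H => φ z * ψ w)) := by
  have : ∀ z, expect (fun w : H => φ z * ψ w) = φ z * expect ψ := fun z => const_mul_expect _ _
  simp only [this]
  rw [expect_mul_const]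

end ExpectBasic

section ExpectShift

variable [Fintype G] [AddCommGroup G]

lemma expect_shift_right (f : G → ℝ) (c : G) : expect (fun x => f (x + c)) = expect f := by
  unfold expect; congr 1
  exact Fintype.sum_equiv (Equiv.addRight c) _ _ (fun x => rfl)

lemma expect_shift_left (f : G → ℝ) (c : G) : expect (fun x => f (c + x)) = expect f := by
  unfold expect; congr 1
  exact Fintype.sum_equiv (Equiv.addLeft c) _ _ (fun x => rfl)

lemma expect_shift_sub (f : G → ℝ) (c : G) : expect (fun x => f (x - c)) = expect f := by
  unfold expect; congr 1
  exact Fintype.sum_equiv (Equiv.subRight c) _ _ (fun x => rfl)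

end ExpectShift

section Dconv

variable [Fintype G] [AddCommGroup G]

lemma dconv_apply (u v : G → ℝ) (x : G) :
    dconv u v x = expect (fun y => u y * v (x + y)) := rfl

lemma dconv_nonneg {u v : G → ℝ} (hu : ∀ x, 0 ≤ u x) (hv : ∀ x, 0 ≤ v x) (x : G) :
    0 ≤ dconv u v x :=
  expect_nonneg fun y => mul_nonneg (hu y) (hv _)

lemma expect_dconv (u v : G → ℝ) : expect (dconv u v) = expect u * expect v := by
  unfold dconv
  rw [expect_swap]
  have h1 : ∀ y, expect (fun x => u y * v (x + y)) = u y * expect v := by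
    intro y
    rw [const_mul_expect, expect_shift_right]
  simp only [h1]
  rw [expect_mul_const, mul_comm]

lemma dconv_shift (u v : G → ℝ) (g : G) :
    dconv (fun z => u (z - g)) (fun z => v (z - g)) = dconv u v := by
  funext x
  unfold dconv
  have h1 : (fun y => u (y - g) * v (x + y - g)) = (fun y => (fun t => u t * v (x + t)) (y - g)) := by
    funext y
    have : x + y - g = x + (y - g) := by abel
    rw [this]
  rw [h1]
  exact expect_shift_sub (fun t => u t * v (x + t)) g

lemma dconv_sub_const (u v : G → ℝ) (a : ℝ) (hu : expect u = a) (hv : expect v = a) :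
    dconv (fun x => u x - a) (fun x => v x - a) = fun x => dconv u v x - a ^ 2 := by
  funext x
  unfold dconv
  have h1 : ∀ y, (u y - a) * (v (x + y) - a)
      = u y * v (x + y) - a * v (x + y) - (u y * a - a * a) := by
    intro y; ring
  simp only [h1]
  rw [expect_sub, expect_sub, const_mul_expect, expect_sub, expect_mul_const]
  rcases isEmpty_or_nonempty G with hG | hG
  · have ha : a = 0 := by rw [← hu]; simp [expect]
    simp [expect, ha]
  · have hs : expect (fun y => v (x + y)) = expect v := expect_shift_left v x
    have hc : expect (fun _ : G => a * a) = a * a := expect_const _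
    rw [hs, hc, hu, hv]
    ring

end Dconv

section TensorCS

variable [Fintype G] [AddCommGroup G]

lemma expect_pi {k : ℕ} (h : Fin k → G → ℝ) :
    expect (fun y : Fin k → G => ∏ i, h i (y i)) = ∏ i, expect (h i) := by
  unfold expect
  rw [← Fintype.prod_sum]
  rw [Finset.prod_div_distrib]
  congr 1
  rw [Finset.prod_const, Finset.card_univ]
  norm_cast
  simp [Fintype.card_fun]

/-- Cauchy–Schwarz for `expect`. -/
lemma expect_cauchy {H : Type*} [Fintype H] (A B : H → ℝ) :
    expect (fun y => A y * B y) ^ 2 ≤ expect (fun y => A y ^ 2) * expect (fun y => B y ^ 2) := by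
  unfold expect
  rw [div_pow, div_mul_div_comm, ← sq]
  rcases isEmpty_or_nonempty H with hH | hH
  · simp
  · have hc : (0:ℝ) < ((Fintype.card H : ℝ) ^ 2) := by
      have : (0:ℝ) < (Fintype.card H : ℝ) := by exact_mod_cast Fintype.card_pos
      positivity
    apply div_le_div_of_nonneg_right ?_ hc.le
    exact Finset.sum_mul_sq_le_sq_mul_sq _ _ _

/-- The tensor representation of `E ∏ dconv`. -/
lemma tensor_repr {k : ℕ} [Nonempty G] (a b : Fin k → G → ℝ) :
    expect (fun x => ∏ i, dconv (a i) (b i) x)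
      = expect (fun y : Fin k → G =>
          expect (fun z => ∏ i, a i (y i + z)) * expect (fun w => ∏ i, b i (y i + w))) := by
  symm
  have h1 : ∀ y : Fin k → G,
      expect (fun z => ∏ i, a i (y i + z)) * expect (fun w => ∏ i, b i (y i + w))
      = expect (fun z => expect (fun w => ∏ i, (a i (y i + z) * b i (y i + w)))) := by
    intro y
    rw [expect_mul_expect]
    simp only [Finset.prod_mul_distrib]
  simp only [h1]
  rw [expect_swap]
  have h2 : ∀ z : G,
      expect (fun y : Fin k → G => expect (fun w => ∏ i, a i (y i + z) * b i (y i + w)))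
      = expect (fun w : G => ∏ i, dconv (a i) (b i) (w - z)) := by
    intro z
    rw [expect_swap]
    congr 1; funext w
    have hp : expect (fun y : Fin k → G => ∏ i, a i (y i + z) * b i (y i + w))
        = ∏ i, expect (fun t => a i (t + z) * b i (t + w)) :=
      expect_pi (fun i t => a i (t + z) * b i (t + w))
    rw [hp]
    apply Finset.prod_congr rfl
    intro i _
    have h3 : (fun t => a i (t + z) * b i (t + w))
        = fun t => (fun s => a i s * b i ((w - z) + s)) (t + z) := by
      funext t
      have hz : (w - z) + (t + z) = t + w := by abel
      rw [← hz]
    rw [h3]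
    have h5 : expect (fun t => (fun s => a i s * b i ((w - z) + s)) (t + z))
        = expect (fun s => a i s * b i ((w - z) + s)) :=
      expect_shift_right (fun s => a i s * b i ((w - z) + s)) z
    rw [h5]
    rfl
  simp only [h2]
  have h4 : ∀ z : G, expect (fun w : G => ∏ i, dconv (a i) (b i) (w - z))
      = expect (fun x => ∏ i, dconv (a i) (b i) x) := by
    intro z
    exact expect_shift_sub (fun x => ∏ i, dconv (a i) (b i) x) z
  simp only [h4]
  rw [expect_const]

lemma dconv_prod_nonneg {k : ℕ} [Nonempty G] (a : Fin k → G → ℝ) :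
    0 ≤ expect (fun x => ∏ i, dconv (a i) (a i) x) := by
  rw [tensor_repr]
  exact expect_nonneg fun y => mul_self_nonneg _

lemma dconv_prod_cs {k : ℕ} [Nonempty G] (a b : Fin k → G → ℝ) :
    expect (fun x => ∏ i, dconv (a i) (b i) x) ^ 2
      ≤ expect (fun x => ∏ i, dconv (a i) (a i) x)
        * expect (fun x => ∏ i, dconv (b i) (b i) x) := by
  rw [tensor_repr a b, tensor_repr a a, tensor_repr b b]
  have := expect_cauchy (H := Fin k → G)
    (fun y => expect (fun z => ∏ i, a i (y i + z)))
    (fun y => expect (fun w => ∏ i, b i (y i + w)))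
  simpa [sq] using this

end TensorCS

section Moments

variable [Fintype G]

lemma expect_sq_le (Y : G → ℝ) : expect Y ^ 2 ≤ expect (fun x => Y x ^ 2) := by
  unfold expect
  rw [div_pow]
  rcases isEmpty_or_nonempty G with hG | hG
  · simp
  · have hc : (0:ℝ) < (Fintype.card G : ℝ) := by exact_mod_cast Fintype.card_pos
    have key := sq_sum_le_card_mul_sum_sq (s := Finset.univ) (f := Y)
    rw [Finset.card_univ] at key
    have hnn : (0:ℝ) ≤ ∑ x, Y x ^ 2 := Finset.sum_nonneg fun i _ => sq_nonneg (Y i)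
    rw [div_le_div_iff₀ (by positivity) hc]
    nlinarith [key, hc, hnn]

lemma expect_pow_logconv (X : G → ℝ) (hX : ∀ x, 0 ≤ X x) (j : ℕ) :
    expect (fun x => X x ^ (j+1)) ^ 2
      ≤ expect (fun x => X x ^ j) * expect (fun x => X x ^ (j+2)) := by
  have h := expect_cauchy (H := G) (fun x => Real.sqrt (X x ^ j)) (fun x => Real.sqrt (X x ^ (j+2)))
  have h1 : ∀ x, Real.sqrt (X x ^ j) * Real.sqrt (X x ^ (j+2)) = X x ^ (j+1) := by
    intro x
    rw [← Real.sqrt_mul (pow_nonneg (hX x) j), ← pow_add]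
    have h2 : j + (j + 2) = (j+1)*2 := by ring
    rw [h2, pow_mul, Real.sqrt_sq (pow_nonneg (hX x) (j+1))]
  have h2 : ∀ x, Real.sqrt (X x ^ j) ^ 2 = X x ^ j :=
    fun x => Real.sq_sqrt (pow_nonneg (hX x) j)
  have h3 : ∀ x, Real.sqrt (X x ^ (j+2)) ^ 2 = X x ^ (j+2) :=
    fun x => Real.sq_sqrt (pow_nonneg (hX x) (j+2))
  simp only [h1, h2, h3] at h
  exact h

lemma expect_pow_succ_mono [Nonempty G] (X : G → ℝ) (hX : ∀ x, 0 ≤ X x) (a : ℕ) :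
    expect (fun x => X x ^ a) ^ (a+1) ≤ expect (fun x => X x ^ (a+1)) ^ a := by
  induction a with
  | zero =>
    simp only [pow_zero, pow_one]
    rw [expect_const]
    simp
  | succ a ih =>
    have hnn : ∀ m : ℕ, 0 ≤ expect (fun x => X x ^ m) :=
      fun m => expect_nonneg (fun x => pow_nonneg (hX x) m)
    rcases eq_or_lt_of_le (hnn (a+1)) with h0 | hpos
    · rw [← h0, zero_pow (by omega)]
      exact pow_nonneg (hnn _) _
    · have lc := expect_pow_logconv X hX a
      have step : (expect (fun x => X x ^ (a+1)))^(2*(a+1))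
          ≤ (expect (fun x => X x ^ a))^(a+1) * (expect (fun x => X x ^ (a+2)))^(a+1) := by
        rw [pow_mul, ← mul_pow]
        exact pow_le_pow_left₀ (sq_nonneg _) lc (a+1)
      have step2 : (expect (fun x => X x ^ a))^(a+1) * (expect (fun x => X x ^ (a+2)))^(a+1)
          ≤ ((expect (fun x => X x ^ (a+1)))^a) * (expect (fun x => X x ^ (a+2)))^(a+1) :=
        mul_le_mul_of_nonneg_right ih (pow_nonneg (hnn _) _)
      have hcan : (expect (fun x => X x ^ (a+1)))^(2*(a+1))
          = (expect (fun x => X x ^ (a+1)))^(a+2) * (expect (fun x => X x ^ (a+1)))^a := by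
        rw [← pow_add]
        congr 1
        omega
      rw [hcan] at step
      have hfin : (expect (fun x => X x ^ (a+1)))^(a+2) * (expect (fun x => X x ^ (a+1)))^a
          ≤ (expect (fun x => X x ^ (a+2)))^(a+1) * (expect (fun x => X x ^ (a+1)))^a := by
        calc (expect (fun x => X x ^ (a+1)))^(a+2) * (expect (fun x => X x ^ (a+1)))^a
            ≤ ((expect (fun x => X x ^ (a+1)))^a) * (expect (fun x => X x ^ (a+2)))^(a+1) :=
              le_trans step step2
          _ = (expect (fun x => X x ^ (a+2)))^(a+1) * (expect (fun x => X x ^ (a+1)))^a := by ring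
      exact le_of_mul_le_mul_right hfin (pow_pos hpos a)

end Moments

section Unbalancing

variable [Fintype G]

set_option maxHeartbeats 1600000 in
lemma unbalancing [Nonempty G] (f : G → ℝ) (p : ℕ) (hp : 2 ≤ p)
    (ε : ℝ) (hε0 : 0 < ε) (hε1 : ε < 1)
    (hmom : ∀ k : ℕ, 0 ≤ expect (fun x => f x ^ k))
    (hf1 : ∀ x, -1 ≤ f x)
    (hlow : ε ^ p ≤ expect (fun x => f x ^ p)) :
    ∃ p' : ℕ, 1 ≤ p' ∧ (p' : ℝ) ≤ (1000 / ε ^ 2) * p ∧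
      (1 + ε / 2) ^ p' ≤ expect (fun x => (1 + f x) ^ p') := by
  have hε2 : ε ^ 2 ≤ 1 := pow_le_one₀ hε0.le hε1.le
  -- doubling the moment bound
  have hsq : ∀ m : ℕ, ε ^ m ≤ expect (fun x => f x ^ m) →
      ε ^ (2*m) ≤ expect (fun x => f x ^ (2*m)) := by
    intro m hm
    have h1 : (expect (fun x => f x ^ m))^2 ≤ expect (fun x => (f x ^ m)^2) := expect_sq_le _
    have h2 : (fun x => (f x ^ m)^2) = fun x => f x ^ (2*m) := by
      funext x; rw [← pow_mul, mul_comm]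
    rw [h2] at h1
    calc ε^(2*m) = (ε^m)^2 := by rw [← pow_mul, mul_comm]
      _ ≤ (expect (fun x => f x ^ m))^2 := pow_le_pow_left₀ (pow_nonneg hε0.le m) hm 2
      _ ≤ _ := h1
  set a := 8 * p with ha
  have hfa : ε ^ a ≤ expect (fun x => f x ^ a) := by
    have h1 := hsq p hlow
    have h2 := hsq (2*p) h1
    rw [show 2*(2*p) = 4*p by ring] at h2
    have h3 := hsq (4*p) h2
    rw [show 2*(4*p) = 8*p by ring] at h3
    exact h3
  set q := a + 1 with hq
  set P : G → ℝ := fun x => max (f x) 0 with hP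
  set M : G → ℝ := fun x => max (- f x) 0 with hM
  have hPnn : ∀ x, 0 ≤ P x := fun x => le_max_right _ _
  have hMnn : ∀ x, 0 ≤ M x := fun x => le_max_right _ _
  have hg_nn : ∀ x, 0 ≤ 1 + f x := fun x => by linarith [hf1 x]
  have hPg : ∀ x, P x ≤ 1 + f x := fun x => max_le (by linarith) (hg_nn x)
  have haeven : Even a := ⟨4*p, by omega⟩
  have ha0 : a ≠ 0 := by omega
  have hsplit_even : ∀ x, f x ^ a = P x ^ a + M x ^ a := by
    intro x
    rcases le_or_gt 0 (f x) with h | h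
    · rw [hP, hM]
      simp only [max_eq_left h, max_eq_right (by linarith : -f x ≤ (0:ℝ)), zero_pow ha0]
      ring
    · rw [hP, hM]
      simp only [max_eq_right h.le, max_eq_left (by linarith : (0:ℝ) ≤ -f x), zero_pow ha0]
      rw [haeven.neg_pow]
      ring
  have hoddq : Odd q := haeven.add_one
  have hsplit_odd : ∀ x, f x ^ q = P x ^ q - M x ^ q := by
    intro x
    rcases le_or_gt 0 (f x) with h | h
    · rw [hP, hM]
      simp only [max_eq_left h, max_eq_right (by linarith : -f x ≤ (0:ℝ)), zero_pow (by omega : q ≠ 0)]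
      ring
    · rw [hP, hM]
      simp only [max_eq_right h.le, max_eq_left (by linarith : (0:ℝ) ≤ -f x), zero_pow (by omega : q ≠ 0)]
      rw [hoddq.neg_pow]
      ring
  have hEsplit : expect (fun x => f x ^ a)
      = expect (fun x => P x ^ a) + expect (fun x => M x ^ a) := by
    calc expect (fun x => f x ^ a) = expect (fun x => P x ^ a + M x ^ a) := by
          congr 1; funext x; exact hsplit_even x
      _ = _ := expect_add _ _
  have hEsplitq : expect (fun x => f x ^ q)
      = expect (fun x => P x ^ q) - expect (fun x => M x ^ q) := by
    calc expect (fun x => f x ^ q) = expect (fun x => P x ^ q - M x ^ q) := by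
          congr 1; funext x; exact hsplit_odd x
      _ = _ := expect_sub _ _
  set β := expect (fun x => P x ^ q) with hβ
  have hβnn : 0 ≤ β := expect_nonneg fun x => pow_nonneg (hPnn x) q
  have hMqnn : 0 ≤ expect (fun x => M x ^ q) :=
    expect_nonneg fun x => pow_nonneg (hMnn x) q
  have hMq_le : expect (fun x => M x ^ q) ≤ β := by
    have h := hmom q
    rw [hEsplitq] at h
    linarith
  have hmono1 : (expect (fun x => P x ^ a))^q ≤ β^a := expect_pow_succ_mono P hPnn a
  have hmono2 : (expect (fun x => M x ^ a))^q ≤ β^a := by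
    calc (expect (fun x => M x ^ a))^q ≤ (expect (fun x => M x ^ q))^a :=
          expect_pow_succ_mono M hMnn a
      _ ≤ β^a := pow_le_pow_left₀ hMqnn hMq_le a
  -- β ≥ ε^q / 4
  have hβlow : ε ^ q / 4 ≤ β := by
    by_contra hcon
    push_neg at hcon
    have hPa_nn : 0 ≤ expect (fun x => P x ^ a) := expect_nonneg fun x => pow_nonneg (hPnn x) a
    have hMa_nn : 0 ≤ expect (fun x => M x ^ a) := expect_nonneg fun x => pow_nonneg (hMnn x) a
    set u := expect (fun x => P x ^ a) with hu
    set v := expect (fun x => M x ^ a) with hv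
    have hmax : u + v ≤ 2 * max u v := by
      rcases le_total u v with h | h
      · rw [max_eq_right h]; linarith
      · rw [max_eq_left h]; linarith
    have h6 : (ε^a)^q ≤ (u+v)^q := by
      apply pow_le_pow_left₀ (pow_nonneg hε0.le a)
      rw [← hEsplit]; exact hfa
    have h7 : (u+v)^q ≤ 2^q * (max u v)^q := by
      rw [← mul_pow]
      exact pow_le_pow_left₀ (by positivity) hmax q
    have h8 : (max u v)^q ≤ β^a := by
      rcases le_total u v with h | h
      · rw [max_eq_right h]; exact hmono2
      · rw [max_eq_left h]; exact hmono1
    have h9 : β^a ≤ (ε^q/4)^a := pow_le_pow_left₀ hβnn hcon.le a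
    have h10 : (ε^a)^q ≤ 2^q * (ε^q/4)^a := by
      calc (ε^a)^q ≤ 2^q * (max u v)^q := le_trans h6 h7
        _ ≤ 2^q * β^a := by
            apply mul_le_mul_of_nonneg_left h8 (by positivity)
        _ ≤ 2^q * (ε^q/4)^a := mul_le_mul_of_nonneg_left h9 (by positivity)
    have hid : (ε^a)^q = (ε^q)^a := by rw [← pow_mul, ← pow_mul, mul_comm]
    have hid2 : (ε^q/4)^a = (ε^q)^a / 4^a := div_pow _ _ a
    rw [hid, hid2] at h10
    have hεq : (0:ℝ) < (ε^q)^a := by positivity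
    have hpow : (2:ℝ)^q < 4^a := by
      have h4 : (4:ℝ)^a = 2^(2*a) := by
        rw [show (4:ℝ) = 2^2 by norm_num, ← pow_mul]
      rw [h4]
      exact pow_lt_pow_right₀ one_lt_two (by omega)
    have h11 : (ε^q)^a * 4^a ≤ 2^q * (ε^q)^a := by
      have h12 := mul_le_mul_of_nonneg_right h10 (show (0:ℝ) ≤ 4^a by positivity)
      calc (ε^q)^a * 4^a ≤ (2^q * ((ε^q)^a / 4^a)) * 4^a := h12
        _ = 2^q * (ε^q)^a := by field_simp
    nlinarith [hεq, hpow, h11]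
  -- the set T of large values
  set n := (Fintype.card G : ℝ) with hn
  have hnpos : 0 < n := by rw [hn]; exact_mod_cast Fintype.card_pos
  set T : Finset G := Finset.univ.filter (fun x => 3*ε/4 ≤ f x) with hT
  have h34 : ((3:ℝ)/4)^q ≤ 1/8 := by
    calc ((3:ℝ)/4)^q ≤ (3/4)^8 := by
          apply pow_le_pow_of_le_one (by norm_num) (by norm_num) (by omega)
      _ ≤ 1/8 := by norm_num
  have hout : ∑ x ∈ Finset.univ \ T, P x ^ q ≤ n * ((3*ε/4)^q) := by
    have h1 : ∀ x ∈ Finset.univ \ T, P x ^ q ≤ (3*ε/4)^q := by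
      intro x hx
      rw [Finset.mem_sdiff, hT, Finset.mem_filter] at hx
      have hxf : f x < 3*ε/4 := by
        by_contra hc
        exact hx.2 ⟨Finset.mem_univ x, by linarith⟩
      apply pow_le_pow_left₀ (hPnn x)
      exact max_le hxf.le (by positivity)
    calc ∑ x ∈ Finset.univ \ T, P x ^ q ≤ ∑ _x ∈ Finset.univ \ T, (3*ε/4)^q :=
          Finset.sum_le_sum h1
      _ = ((Finset.univ \ T).card : ℝ) * (3*ε/4)^q := by rw [Finset.sum_const, nsmul_eq_mul]
      _ ≤ n * ((3*ε/4)^q) := by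
          apply mul_le_mul_of_nonneg_right _ (by positivity)
          rw [hn]
          exact_mod_cast Finset.card_le_card (Finset.sdiff_subset)
  have hsum_split : ∑ x, P x ^ q = ∑ x ∈ T, P x ^ q + ∑ x ∈ Finset.univ \ T, P x ^ q := by
    rw [← Finset.sum_sdiff (Finset.subset_univ T), add_comm]
  have hsum_all : n * (ε^q/4) ≤ ∑ x, P x ^ q := by
    have hβ' : β = (∑ x, P x ^ q) / n := rfl
    have hbl := hβlow
    rw [hβ'] at hbl
    calc n * (ε^q/4) ≤ n * ((∑ x, P x ^ q)/n) := mul_le_mul_of_nonneg_left hbl hnpos.le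
      _ = ∑ x, P x ^ q := by field_simp
  have h2' : (3*ε/4 : ℝ)^q = (3/4)^q * ε^q := by
    rw [← mul_pow]; congr 1; ring
  have hTsum : n * (ε^q/8) ≤ ∑ x ∈ T, P x ^ q := by
    have hb : n * ((3*ε/4)^q) ≤ n * (ε^q/8) := by
      apply mul_le_mul_of_nonneg_left _ hnpos.le
      rw [h2']
      have hεqnn : (0:ℝ) ≤ ε^q := by positivity
      have := mul_le_mul_of_nonneg_right h34 hεqnn
      linarith
    linarith [hout, hsum_all, hsum_split]
  -- Cauchy-Schwarz on T
  have hcs : (∑ x ∈ T, P x ^ q)^2 ≤ (∑ x ∈ T, (1 + f x)^(2*q)) * (T.card : ℝ) := by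
    have h := Finset.sum_mul_sq_le_sq_mul_sq T (fun x => P x ^ q) (fun _ => (1:ℝ))
    simp only [mul_one, one_pow] at h
    have h2 : ∑ x ∈ T, (P x ^ q)^2 ≤ ∑ x ∈ T, (1 + f x)^(2*q) := by
      apply Finset.sum_le_sum
      intro x _
      rw [← pow_mul, mul_comm q 2]
      exact pow_le_pow_left₀ (hPnn x) (hPg x) (2*q)
    have h3 : (∑ _x ∈ T, (1:ℝ)) = (T.card : ℝ) := by
      rw [Finset.sum_const, nsmul_eq_mul, mul_one]
    rw [h3] at h
    calc (∑ x ∈ T, P x ^ q)^2 ≤ (∑ x ∈ T, (P x ^ q)^2) * (T.card : ℝ) := h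
      _ ≤ (∑ x ∈ T, (1 + f x)^(2*q)) * (T.card : ℝ) :=
          mul_le_mul_of_nonneg_right h2 (by positivity)
  by_cases hbig : (1 + ε/2)^(2*q) ≤ expect (fun x => (1 + f x)^(2*q))
  · refine ⟨2*q, by omega, ?_, hbig⟩
    have hC : (1000:ℝ) ≤ 1000/ε^2 := by
      rw [le_div_iff₀ (by positivity)]
      linarith [hε2]
    have hcast : ((2*q : ℕ):ℝ) = 16*(p:ℝ) + 2 := by
      rw [hq, ha]; push_cast; ring
    rw [hcast]
    have hp1 : (1:ℝ) ≤ (p:ℝ) := by exact_mod_cast (by omega : 1 ≤ p)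
    have hpr := mul_le_mul_of_nonneg_right hC (by positivity : (0:ℝ) ≤ (p:ℝ))
    have h17 : (16:ℝ)*(p:ℝ) + 2 ≤ 1000*(p:ℝ) := by linarith
    linarith
  · push_neg at hbig
    have h1e : (1:ℝ) + ε/2 ≤ 2 := by linarith
    have hEg2q : expect (fun x => (1 + f x)^(2*q)) ≤ 2^(2*q) := by
      calc expect (fun x => (1 + f x)^(2*q)) ≤ (1 + ε/2)^(2*q) := hbig.le
        _ ≤ 2^(2*q) := pow_le_pow_left₀ (by linarith) h1e (2*q)
    have hsumT2q : ∑ x ∈ T, (1 + f x)^(2*q) ≤ n * 2^(2*q) := by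
      have h1 : ∑ x ∈ T, (1 + f x)^(2*q) ≤ ∑ x, (1 + f x)^(2*q) := by
        apply Finset.sum_le_sum_of_subset_of_nonneg (Finset.subset_univ T)
        intro x _ _
        exact pow_nonneg (hg_nn x) _
      have h2 : ∑ x, (1 + f x)^(2*q) = n * expect (fun x => (1 + f x)^(2*q)) := by
        unfold expect; field_simp
        rw [hn]
      calc ∑ x ∈ T, (1 + f x)^(2*q) ≤ ∑ x, (1 + f x)^(2*q) := h1
        _ = n * expect (fun x => (1 + f x)^(2*q)) := h2
        _ ≤ n * 2^(2*q) := mul_le_mul_of_nonneg_left hEg2q hnpos.le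
    -- δ bound : (ε/2)^(2q+6) * n ≤ T.card
    have hc2q : (0:ℝ) < 2^(2*q) := by positivity
    have hδ : (ε/2)^(2*q+6) * n ≤ (T.card : ℝ) := by
      have h1 : (n * (ε^q/8))^2 ≤ (n * 2^(2*q)) * (T.card : ℝ) := by
        calc (n * (ε^q/8))^2 ≤ (∑ x ∈ T, P x ^ q)^2 :=
              pow_le_pow_left₀ (by positivity) hTsum 2
          _ ≤ (∑ x ∈ T, (1 + f x)^(2*q)) * (T.card : ℝ) := hcs
          _ ≤ (n * 2^(2*q)) * (T.card : ℝ) :=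
              mul_le_mul_of_nonneg_right hsumT2q (by positivity)
      set E := (ε^q)^2 with hE
      set c := (2:ℝ)^(2*q) with hcdef
      set t := (T.card : ℝ) with ht
      have h2 : n^2 * (E/64) ≤ (n*c)*t := by
        calc n^2 * (E/64) = (n * (ε^q/8))^2 := by rw [hE]; ring
          _ ≤ (n * c)*t := h1
      have e1 : n * E ≤ 64 * (c * t) := by
        have h2' : n * (n * E) ≤ n * (64 * (c*t)) := by
          have := mul_le_mul_of_nonneg_right h2 (by norm_num : (0:ℝ) ≤ 64)
          linarith
        exact le_of_mul_le_mul_left h2' hnpos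
      have hid3 : (ε/2)^(2*q+6) * (64*c) = ε^(2*q+6) := by
        rw [hcdef, div_pow, pow_add]
        have h26 : (2:ℝ)^(2*q+6) = 2^(2*q) * 64 := by
          rw [pow_add]; norm_num
        rw [h26]
        have : (2:ℝ)^(2*q) ≠ 0 := ne_of_gt hc2q
        field_simp
      have hmono' : ε^(2*q+6) ≤ E := by
        rw [hE, ← pow_mul, mul_comm q 2]
        exact pow_le_pow_of_le_one hε0.le hε1.le (by omega)
      have e2 : (ε/2)^(2*q+6) * (64*c) ≤ E := by rw [hid3]; exact hmono'
      have e2n : (ε/2)^(2*q+6) * (64*c) * n ≤ E * n := mul_le_mul_of_nonneg_right e2 hnpos.le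
      have e3 : (ε/2)^(2*q+6) * n * (64*c) ≤ t * (64*c) := by linarith [e2n, e1]
      exact le_of_mul_le_mul_right e3 (by positivity)
    -- choose p'
    set k := Nat.ceil ((16:ℝ)/ε^2) with hk
    have hk16 : (16:ℝ)/ε^2 ≤ (k:ℝ) := Nat.le_ceil _
    have hkpos : 1 ≤ k := by
      rw [hk]
      apply Nat.one_le_ceil_iff.mpr
      positivity
    set p' := k * (2*q+6) with hp'
    have hp'1 : 1 ≤ p' := by
      have : 1 ≤ 2*q+6 := by omega
      calc 1 = 1*1 := (one_mul 1).symm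
        _ ≤ k * (2*q+6) := Nat.mul_le_mul hkpos this
    have hbern : (2:ℝ)/ε ≤ (1+ε/8)^k := by
      have h1 : 1 + (k:ℝ)*(ε/8) ≤ (1+ε/8)^k :=
        one_add_mul_le_pow (by linarith : (-2:ℝ) ≤ ε/8) k
      have h3 : (2:ℝ)/ε ≤ (k:ℝ)*(ε/8) := by
        calc (2:ℝ)/ε = (16/ε^2)*(ε/8) := by field_simp; ring
          _ ≤ (k:ℝ)*(ε/8) := mul_le_mul_of_nonneg_right hk16 (by positivity)
      linarith
    refine ⟨p', hp'1, ?_, ?_⟩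
    · -- size bound
      have hkle : (k:ℝ) ≤ 17/ε^2 := by
        have h1 : (k:ℝ) < 16/ε^2 + 1 := by
          rw [hk]
          exact Nat.ceil_lt_add_one (by positivity)
        have h2 : (1:ℝ) ≤ 1/ε^2 := by
          rw [le_div_iff₀ (by positivity)]
          linarith [hε2]
        have : 16/ε^2 + 1 ≤ 17/ε^2 := by
          have : (16:ℝ)/ε^2 + 1/ε^2 = 17/ε^2 := by ring
          linarith
        linarith
      have hq' : ((2*q+6 : ℕ):ℝ) = 16*(p:ℝ)+8 := by
        rw [hq, ha]; push_cast; ring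
      have hple : ((p' : ℕ):ℝ) = (k:ℝ) * ((2*q+6 : ℕ):ℝ) := by
        rw [hp']; push_cast; ring
      rw [hple, hq']
      have hp2 : (2:ℝ) ≤ (p:ℝ) := by exact_mod_cast hp
      have h8p : 16*(p:ℝ)+8 ≤ 20*(p:ℝ) := by linarith
      have hknn : (0:ℝ) ≤ (k:ℝ) := by positivity
      calc (k:ℝ) * (16*(p:ℝ)+8) ≤ (17/ε^2) * (20*(p:ℝ)) := by
            apply mul_le_mul hkle h8p (by linarith) (by positivity)
        _ ≤ (1000/ε^2) * (p:ℝ) := by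
            rw [div_mul_eq_mul_div, div_mul_eq_mul_div, div_le_div_iff₀ (by positivity) (by positivity)]
            nlinarith [hp2, sq_nonneg ε, hε0]
    · -- norm bound
      have hT34 : ∀ x ∈ T, (1:ℝ) + 3*ε/4 ≤ 1 + f x := by
        intro x hx
        rw [hT, Finset.mem_filter] at hx
        linarith [hx.2]
      have hsumTp' : (T.card : ℝ) * (1 + 3*ε/4)^p' ≤ ∑ x ∈ T, (1 + f x)^p' := by
        calc (T.card : ℝ) * (1 + 3*ε/4)^p' = ∑ _x ∈ T, (1 + 3*ε/4)^p' := by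
              rw [Finset.sum_const, nsmul_eq_mul]
          _ ≤ ∑ x ∈ T, (1 + f x)^p' := by
              apply Finset.sum_le_sum
              intro x hx
              exact pow_le_pow_left₀ (by linarith) (hT34 x hx) p'
      have hsumgp' : ∑ x ∈ T, (1 + f x)^p' ≤ ∑ x, (1 + f x)^p' := by
        apply Finset.sum_le_sum_of_subset_of_nonneg (Finset.subset_univ T)
        intro x _ _
        exact pow_nonneg (hg_nn x) _
      have hEfin : ((ε/2)^(2*q+6) * (1 + 3*ε/4)^p') ≤ expect (fun x => (1 + f x)^p') := by
        have h1 : ((ε/2)^(2*q+6) * n) * (1 + 3*ε/4)^p' ≤ (T.card : ℝ) * (1 + 3*ε/4)^p' :=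
          mul_le_mul_of_nonneg_right hδ (by positivity)
        have h2 : ((ε/2)^(2*q+6) * n) * (1 + 3*ε/4)^p' ≤ ∑ x, (1 + f x)^p' :=
          le_trans h1 (le_trans hsumTp' hsumgp')
        have h3 : expect (fun x => (1 + f x)^p') = (∑ x, (1 + f x)^p')/n := rfl
        rw [h3, le_div_iff₀ hnpos]
        calc (ε/2)^(2*q+6) * (1 + 3*ε/4)^p' * n
            = ((ε/2)^(2*q+6) * n) * (1 + 3*ε/4)^p' := by ring
          _ ≤ _ := h2
      have hbase : (1 + ε/2) * (1 + ε/8) ≤ 1 + 3*ε/4 := by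
        have hεsq : ε^2 ≤ ε := by
          calc ε^2 = ε*ε := sq ε
            _ ≤ ε*1 := mul_le_mul_of_nonneg_left hε1.le hε0.le
            _ = ε := mul_one ε
        nlinarith [hεsq]
      have hfinal : (1 + ε/2)^p' ≤ (ε/2)^(2*q+6) * (1 + 3*ε/4)^p' := by
        have h1 : ((1 + ε/2) * (1 + ε/8))^p' ≤ (1 + 3*ε/4)^p' :=
          pow_le_pow_left₀ (by positivity) hbase p'
        have h2 : (1+ε/8)^p' = ((1+ε/8)^k)^(2*q+6) := by
          rw [hp', pow_mul]
        have h3 : ((2:ℝ)/ε)^(2*q+6) ≤ (1+ε/8)^p' := by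
          rw [h2]
          exact pow_le_pow_left₀ (by positivity) hbern (2*q+6)
        have h4 : (ε/2)^(2*q+6) * ((2:ℝ)/ε)^(2*q+6) = 1 := by
          rw [← mul_pow]
          have : (ε/2) * ((2:ℝ)/ε) = 1 := by field_simp
          rw [this, one_pow]
        calc (1 + ε/2)^p' = (1 + ε/2)^p' * ((ε/2)^(2*q+6) * ((2:ℝ)/ε)^(2*q+6)) := by
              rw [h4, mul_one]
          _ = (ε/2)^(2*q+6) * ((1 + ε/2)^p' * ((2:ℝ)/ε)^(2*q+6)) := by ring
          _ ≤ (ε/2)^(2*q+6) * ((1 + ε/2)^p' * (1+ε/8)^p') := by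
              apply mul_le_mul_of_nonneg_left _ (by positivity)
              exact mul_le_mul_of_nonneg_left h3 (by positivity)
          _ = (ε/2)^(2*q+6) * ((1 + ε/2) * (1 + ε/8))^p' := by rw [mul_pow]
          _ ≤ (ε/2)^(2*q+6) * (1 + 3*ε/4)^p' := by
              apply mul_le_mul_of_nonneg_left h1 (by positivity)
      exact le_trans hfinal hEfin

end Unbalancing

section Pnorm

variable [Fintype G]

lemma le_pnorm_of_pow_le {h : G → ℝ} {c : ℝ} (hc : 0 ≤ c) {m : ℕ} (hm : m ≠ 0)
    (H : c ^ m ≤ expect (fun x => |h x| ^ m)) : c ≤ pnorm m h := by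
  unfold pnorm wnorm
  simp only [one_mul]
  calc c = (c ^ m) ^ ((m:ℝ)⁻¹) := (Real.pow_rpow_inv_natCast hc hm).symm
    _ ≤ (expect (fun x => |h x| ^ m)) ^ ((m:ℝ)⁻¹) :=
        Real.rpow_le_rpow (by positivity) H (by positivity)

lemma pow_le_of_le_pnorm {h : G → ℝ} {c : ℝ} (hc : 0 ≤ c) {m : ℕ} (hm : m ≠ 0)
    (H : c ≤ pnorm m h) : c ^ m ≤ expect (fun x => |h x| ^ m) := by
  have hE : 0 ≤ expect (fun x => |h x| ^ m) :=
    expect_nonneg fun x => pow_nonneg (abs_nonneg _) m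
  have h1 : pnorm m h ^ m = expect (fun x => |h x| ^ m) := by
    unfold pnorm wnorm
    simp only [one_mul]
    exact Real.rpow_inv_natCast_pow hE hm
  calc c ^ m ≤ pnorm m h ^ m := pow_le_pow_left₀ hc H m
    _ = _ := h1

end Pnorm

section Setup

variable [Fintype G] [AddCommGroup G]

lemma ind_nonneg (A : Set G) (x : G) : 0 ≤ ind A x :=
  Set.indicator_nonneg (fun _ _ => zero_le_one) x

lemma ind_image_eq (A : Set G) (g : G) :
    ind ((fun a => a + g) '' A) = fun z => ind A (z - g) := by
  funext z
  unfold ind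
  rw [Set.indicator_apply, Set.indicator_apply]
  apply if_congr _ rfl rfl
  constructor
  · rintro ⟨a, ha, rfl⟩
    simpa using ha
  · intro h
    exact ⟨z - g, h, by simp⟩

end Setup

set_option maxHeartbeats 1600000 in
theorem statement12 (ε : ℝ) (hε0 : 0 < ε) (hε1 : ε < 1) :
    ∃ C : ℝ, 0 < C ∧ ∀ (G : Type) [AddCommGroup G] [Fintype G],
      ∀ A : G → Set G, (∃ g, (A g).Nonempty) →
      ∀ p : ℕ, 2 ≤ p → Even p →
        ε ≤ pnorm p (fun x =>
          muFun (fun y => ∑ g, dconv (ind (A g)) (ind ((fun a => a + g) '' A g)) y) x - 1) →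
        ∃ p' : ℕ, 1 ≤ p' ∧ (p' : ℝ) ≤ C * p ∧
          1 + ε / 2 ≤ pnorm p' (muFun (fun y => ∑ g, dconv (ind (A g)) (ind (A g)) y)) := by
  refine ⟨1000/ε^2, by positivity, ?_⟩
  intro G _ _ A hA p hp hpe hnorm
  obtain ⟨g₀, hg₀⟩ := hA
  haveI : Nonempty G := ⟨g₀⟩
  set Fd : G → ℝ := fun y => ∑ g, dconv (ind (A g)) (ind ((fun a => a + g) '' A g)) y with hFd
  set Fd' : G → ℝ := fun y => ∑ g, dconv (ind (A g)) (ind (A g)) y with hFd'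
  set α : G → ℝ := fun g => expect (ind (A g)) with hα
  have hαnn : ∀ g, 0 ≤ α g := fun g => expect_nonneg (fun x => ind_nonneg _ x)
  set S : ℝ := ∑ g, (α g)^2 with hS
  have hcard : (0:ℝ) < (Fintype.card G : ℝ) := by exact_mod_cast Fintype.card_pos
  have hα0 : 0 < α g₀ := by
    obtain ⟨x0, hx0⟩ := hg₀
    have h1 : (0:ℝ) < ind (A g₀) x0 := by
      unfold ind
      rw [Set.indicator_of_mem hx0]
      norm_num
    have h2 : (0:ℝ) < ∑ x, ind (A g₀) x :=
      Finset.sum_pos' (fun i _ => ind_nonneg _ i) ⟨x0, Finset.mem_univ x0, h1⟩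
    exact div_pos h2 hcard
  have hSpos : 0 < S :=
    Finset.sum_pos' (fun g _ => sq_nonneg (α g)) ⟨g₀, Finset.mem_univ g₀, pow_pos hα0 2⟩
  set vt : G → G → ℝ := fun g x => ind (A g) x - α g with hvt
  set ut : G → G → ℝ := fun g x => ind (A g) (x - g) - α g with hut
  have hexp_shift : ∀ g : G, expect (fun x => ind (A g) (x - g)) = α g :=
    fun g => expect_shift_sub (ind (A g)) g
  have hDg : ∀ g, dconv (vt g) (ut g)
      = fun x => dconv (ind (A g)) (fun z => ind (A g) (z - g)) x - (α g)^2 :=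
    fun g => dconv_sub_const (ind (A g)) (fun z => ind (A g) (z - g)) (α g) rfl (hexp_shift g)
  have hDg' : ∀ g, dconv (vt g) (vt g)
      = fun x => dconv (ind (A g)) (ind (A g)) x - (α g)^2 :=
    fun g => dconv_sub_const (ind (A g)) (ind (A g)) (α g) rfl rfl
  have hut_shift : ∀ g, dconv (ut g) (ut g) = dconv (vt g) (vt g) :=
    fun g => dconv_shift (vt g) (vt g) g
  have himg : ∀ g, ind ((fun a => a + g) '' A g) = fun z => ind (A g) (z - g) :=
    fun g => ind_image_eq (A g) g
  -- expectations
  have hEFd : expect Fd = S := by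
    rw [hFd]
    calc expect (fun y => ∑ g, dconv (ind (A g)) (ind ((fun a => a + g) '' A g)) y)
        = ∑ g, expect (dconv (ind (A g)) (ind ((fun a => a + g) '' A g))) :=
          expect_finsum _
      _ = S := by
          rw [hS]
          apply Finset.sum_congr rfl
          intro g _
          rw [expect_dconv, himg g, hexp_shift g, sq]
  have hEFd' : expect Fd' = S := by
    rw [hFd']
    calc expect (fun y => ∑ g, dconv (ind (A g)) (ind (A g)) y)
        = ∑ g, expect (dconv (ind (A g)) (ind (A g))) := expect_finsum _
      _ = S := by
          rw [hS]
          apply Finset.sum_congr rfl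
          intro g _
          rw [expect_dconv, sq]
  -- pointwise representations
  have hrepr : ∀ x, ∑ g, dconv (vt g) (ut g) x = Fd x - S := by
    intro x
    have h1 : ∀ g, dconv (vt g) (ut g) x
        = dconv (ind (A g)) (ind ((fun a => a + g) '' A g)) x - (α g)^2 := by
      intro g
      rw [hDg g, himg g]
    calc ∑ g, dconv (vt g) (ut g) x
        = ∑ g, (dconv (ind (A g)) (ind ((fun a => a + g) '' A g)) x - (α g)^2) :=
          Finset.sum_congr rfl (fun g _ => h1 g)
      _ = Fd x - S := by rw [Finset.sum_sub_distrib, hFd, hS]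
  have hrepr' : ∀ x, ∑ g, dconv (vt g) (vt g) x = Fd' x - S := by
    intro x
    calc ∑ g, dconv (vt g) (vt g) x
        = ∑ g, (dconv (ind (A g)) (ind (A g)) x - (α g)^2) :=
          Finset.sum_congr rfl (fun g _ => by rw [hDg' g])
      _ = Fd' x - S := by rw [Finset.sum_sub_distrib, hFd', hS]
  have hmuF : ∀ x, muFun Fd x - 1 = (∑ g, dconv (vt g) (ut g) x)/S := by
    intro x
    rw [hrepr x]
    unfold muFun
    rw [hEFd]
    field_simp
  have hmuF' : ∀ x, muFun Fd' x - 1 = (∑ g, dconv (vt g) (vt g) x)/S := by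
    intro x
    rw [hrepr' x]
    unfold muFun
    rw [hEFd']
    field_simp
  -- moment comparison
  have hcomp : ∀ k : ℕ,
      expect (fun x => (∑ g, dconv (vt g) (ut g) x)^k)
        ≤ expect (fun x => (∑ g, dconv (vt g) (vt g) x)^k)
      ∧ 0 ≤ expect (fun x => (∑ g, dconv (vt g) (vt g) x)^k) := by
    intro k
    have hexp1 : expect (fun x => (∑ g, dconv (vt g) (ut g) x)^k)
        = ∑ P : Fin k → G, expect (fun x => ∏ i, dconv (vt (P i)) (ut (P i)) x) := by
      rw [← expect_finsum]
      congr 1; funext x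
      exact Fintype.sum_pow (fun g => dconv (vt g) (ut g) x) k
    have hexp2 : expect (fun x => (∑ g, dconv (vt g) (vt g) x)^k)
        = ∑ P : Fin k → G, expect (fun x => ∏ i, dconv (vt (P i)) (vt (P i)) x) := by
      rw [← expect_finsum]
      congr 1; funext x
      exact Fintype.sum_pow (fun g => dconv (vt g) (vt g) x) k
    have hterm_nn : ∀ P : Fin k → G,
        0 ≤ expect (fun x => ∏ i, dconv (vt (P i)) (vt (P i)) x) :=
      fun P => dconv_prod_nonneg (fun i => vt (P i))
    have hterm : ∀ P : Fin k → G,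
        expect (fun x => ∏ i, dconv (vt (P i)) (ut (P i)) x)
          ≤ expect (fun x => ∏ i, dconv (vt (P i)) (vt (P i)) x) := by
      intro P
      have hcs := dconv_prod_cs (fun i => vt (P i)) (fun i => ut (P i))
      have hswap : expect (fun x => ∏ i, dconv (ut (P i)) (ut (P i)) x)
          = expect (fun x => ∏ i, dconv (vt (P i)) (vt (P i)) x) := by
        congr 1; funext x
        exact Finset.prod_congr rfl (fun i _ => by rw [hut_shift (P i)])
      rw [hswap] at hcs
      nlinarith [hcs, hterm_nn P]
    constructor
    · rw [hexp1, hexp2]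
      exact Finset.sum_le_sum (fun P _ => hterm P)
    · rw [hexp2]
      exact Finset.sum_nonneg (fun P _ => hterm_nn P)
  -- from the hypothesis
  have hp0 : p ≠ 0 := by omega
  have hεp := pow_le_of_le_pnorm hε0.le hp0 hnorm
  have habs : (fun x => |muFun Fd x - 1| ^ p)
      = fun x => ((∑ g, dconv (vt g) (ut g) x)^p)/S^p := by
    funext x
    rw [hpe.pow_abs, hmuF x, div_pow]
  rw [habs] at hεp
  -- define f'
  set f' : G → ℝ := fun x => muFun Fd' x - 1 with hf'def
  have hf'eq : ∀ x, f' x = (∑ g, dconv (vt g) (vt g) x)/S := hmuF'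
  have hmomf' : ∀ k : ℕ, 0 ≤ expect (fun x => f' x ^ k) := by
    intro k
    have h1 : (fun x => f' x ^ k) = fun x => ((∑ g, dconv (vt g) (vt g) x)^k)/S^k := by
      funext x; rw [hf'eq x, div_pow]
    rw [h1, expect_div_const]
    exact div_nonneg (hcomp k).2 (by positivity)
  have hlowf' : ε^p ≤ expect (fun x => f' x ^ p) := by
    have h1 : (fun x => f' x ^ p) = fun x => ((∑ g, dconv (vt g) (vt g) x)^p)/S^p := by
      funext x; rw [hf'eq x, div_pow]
    rw [h1, expect_div_const]
    have h2 : expect (fun x => ((∑ g, dconv (vt g) (ut g) x)^p)/S^p)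
        = (expect (fun x => (∑ g, dconv (vt g) (ut g) x)^p))/S^p := expect_div_const _ _
    rw [h2] at hεp
    have h3 := div_le_div_of_nonneg_right ((hcomp p).1) (show (0:ℝ) ≤ S^p by positivity)
    linarith [hεp, h3]
  have hmu'nn : ∀ x, 0 ≤ muFun Fd' x := by
    intro x
    unfold muFun
    rw [hEFd']
    apply div_nonneg _ hSpos.le
    rw [hFd']
    exact Finset.sum_nonneg fun g _ =>
      dconv_nonneg (fun y => ind_nonneg _ y) (fun y => ind_nonneg _ y) x
  have hf'1 : ∀ x, -1 ≤ f' x := by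
    intro x
    rw [hf'def]
    have := hmu'nn x
    simp only []
    linarith
  obtain ⟨p', hp'1, hp'le, hp'bound⟩ := unbalancing f' p hp ε hε0 hε1 hmomf' hf'1 hlowf'
  refine ⟨p', hp'1, hp'le, ?_⟩
  apply le_pnorm_of_pow_le (by linarith) (by omega)
  have hfin : (fun x => |muFun Fd' x| ^ p') = fun x => (1 + f' x)^p' := by
    funext x
    rw [abs_of_nonneg (hmu'nn x), hf'def]
    congr 1
    ring
  rw [hfin]
  exact hp'bound



end SkewPaper
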